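/- There exists an absolute constant γ > 0 such that for every n > 2 the two-dimensional hyperbolic cross Γ(γ b_n) contains no nonzero point of the lattice L(n); that is, Γ(γ b_n) ∩ (L(n) \ {0}) = ∅. -/

import Mathlib

/-!
Write `F = Nat.fib`, so that `b_n = F_{n+1}`, and let `(x, y) ≠ 0` with `F_{K+1} ∣ x + F_K y`,
i.e. `x = a_K` where `a_k = p F_{k+1} - y F_k` for some integer `p`. The sequence `a_k` satisfies
the Fibonacci recursion, so `a_{j+s+1} = a_j F_s + a_{j+1} F_{s+1}`, and by Cassini's identity
`|a_j F_{j+2} - a_{j+1} F_{j+1}| = |y|`. Choosing `j` with `F_j ≤ |y| < F_{j+1}`, the second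
identity forces `a_j` and `a_{j+1} ≠ 0` to have the same sign, so the first gives
`|x| ≥ F_{K-j}` whenever `K > j`. Since `F_{a+b+1} ≤ 5 F_a F_b`, this yields
`F_{K+1} ≤ 5 |x| |y|`, while for `K ≤ j` already `F_{K+1} ≤ 2 |y|`. Hence `γ = 1/6` works.
-/

/-- Fibonacci numbers with `b₀ = b₁ = 1`. -/
def fibb : ℕ → ℕ
  | 0 => 1
  | 1 => 1
  | n + 2 => fibb (n + 1) + fibb n

open Nat

lemma fibb_eq_fib (n : ℕ) : fibb n = fib (n + 1) := by
  induction n using Nat.twoStepInduction with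
  | zero => rfl
  | one => rfl
  | more n ih₁ ih₂ => rw [fibb, ih₁, ih₂, fib_add_two (n := n + 1), add_comm]

lemma fib_succ_le_two_mul_fib {j : ℕ} (hj : j ≠ 0) : fib (j + 1) ≤ 2 * fib j := by
  obtain ⟨i, rfl⟩ := exists_eq_add_one_of_ne_zero hj
  rw [fib_add_two]
  have := fib_le_fib_succ (n := i)
  omega

lemma fib_add_add_one_le_five_mul {a b : ℕ} (ha : a ≠ 0) (hb : b ≠ 0) :
    fib (a + b + 1) ≤ 5 * (fib a * fib b) := by
  have := fib_succ_le_two_mul_fib ha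
  have := fib_succ_le_two_mul_fib hb
  rw [fib_add]
  nlinarith

lemma fib_mul_fib_add_two_sub_sq (j : ℕ) :
    (fib j : ℤ) * fib (j + 2) - (fib (j + 1) : ℤ) ^ 2 = (-1) ^ (j + 1) := by
  have h := Int.fib_succ_mul_fib_pred_sub_fib_sq ((j + 1 : ℕ) : ℤ)
  rw [show ((j + 1 : ℕ) : ℤ) + 1 = ((j + 2 : ℕ) : ℤ) by push_cast; ring,
    show ((j + 1 : ℕ) : ℤ) - 1 = j by push_cast; ring, Int.natAbs_natCast] at h
  simpa only [Int.fib_natCast, mul_comm] using h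

lemma ne_zero_and_mul_nonneg_of_abs_sub_lt {u v a b : ℤ} (hab : a ≤ b)
    (hpos : 0 < |u * b - v * a|) (hlt : |u * b - v * a| < a) : v ≠ 0 ∧ 0 ≤ u * v := by
  have ha : 0 < a := hpos.trans hlt
  refine ⟨fun hv => ?_, ?_⟩
  · rw [hv, zero_mul, sub_zero, abs_mul, abs_of_pos (ha.trans_le hab)] at hpos hlt
    nlinarith [Int.one_le_abs (abs_pos.1 (pos_of_mul_pos_left hpos (by omega)))]
  · by_contra! huv
    rcases lt_or_gt_of_ne (show v ≠ 0 by rintro rfl; simp at huv) with hv | hv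
    · have hu : 0 < u := by nlinarith
      rw [abs_of_pos (by nlinarith)] at hlt
      nlinarith
    · have hu : u < 0 := by nlinarith
      rw [abs_of_neg (by nlinarith)] at hlt
      nlinarith

lemma le_abs_mul_add_mul {u v a b : ℤ} (ha : 0 ≤ a) (hb : 0 ≤ b) (hv : v ≠ 0)
    (huv : 0 ≤ u * v) : b ≤ |u * a + v * b| := by
  rcases hv.lt_or_gt with hv | hv
  · have hu : u ≤ 0 := by nlinarith
    rw [abs_of_nonpos (by nlinarith)]
    nlinarith
  · have hu : 0 ≤ u := by nlinarith
    rw [abs_of_nonneg (by positivity)]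
    nlinarith

def fibForm (p q : ℤ) (k : ℕ) : ℤ := p * fib (k + 1) - q * fib k

lemma fibForm_add (p q : ℤ) (j s : ℕ) :
    fibForm p q (j + s + 1) = fibForm p q j * fib s + fibForm p q (j + 1) * fib (s + 1) := by
  simp only [fibForm, show j + s + 1 + 1 = j + 1 + s + 1 by ring, fib_add]
  push_cast
  ring

lemma fibForm_mul_fib_sub (p q : ℤ) (j : ℕ) :
    fibForm p q j * fib (j + 2) - fibForm p q (j + 1) * fib (j + 1) = (-1) ^ j * q := by
  simp only [fibForm]
  linear_combination (-q) * fib_mul_fib_add_two_sub_sq j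

lemma fib_succ_le_abs_fibForm (p q : ℤ) (j s : ℕ) (hq : q ≠ 0) (hqj : |q| < fib (j + 1)) :
    (fib (s + 1) : ℤ) ≤ |fibForm p q (j + s + 1)| := by
  have hcas : |fibForm p q j * fib (j + 2) - fibForm p q (j + 1) * fib (j + 1)| = |q| := by
    rw [fibForm_mul_fib_sub, abs_mul, abs_pow, abs_neg, abs_one, one_pow, one_mul]
  obtain ⟨hv, huv⟩ := ne_zero_and_mul_nonneg_of_abs_sub_lt
    (by exact_mod_cast fib_le_fib_succ) (hcas ▸ abs_pos.2 hq) (hcas ▸ hqj)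
  rw [fibForm_add]
  exact le_abs_mul_add_mul (by positivity) (by positivity) hv huv

theorem fib_succ_le_five_mul_of_dvd (K : ℕ) (x y : ℤ) (hxy : (x, y) ≠ 0)
    (hdvd : (fib (K + 1) : ℤ) ∣ x + fib K * y) :
    (fib (K + 1) : ℤ) ≤ 5 * (max |x| 1 * max |y| 1) := by
  by_cases hy : y = 0
  · subst hy
    have hx : x ≠ 0 := by simpa using hxy
    have := Int.le_of_dvd (abs_pos.2 hx) ((dvd_abs _ _).2 (by simpa using hdvd))
    simp only [abs_zero, zero_le_one, max_eq_right, mul_one]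
    linarith [le_max_left |x| 1]
  obtain ⟨p, hp⟩ := hdvd
  have hx : x = fibForm p y K := by rw [fibForm]; linarith
  set j := greatestFib y.natAbs
  have hjy : (fib j : ℤ) ≤ |y| := by
    rw [Int.abs_eq_natAbs]; exact_mod_cast fib_greatestFib_le _
  have hyj : |y| < fib (j + 1) := by
    rw [Int.abs_eq_natAbs]; exact_mod_cast lt_fib_greatestFib_add_one _
  have hj : j ≠ 0 := greatestFib_ne_zero.2 (Int.natAbs_ne_zero.2 hy)
  have hyM : |y| ≤ max |x| 1 * max |y| 1 := by
    nlinarith [le_max_left |y| 1, le_max_right |x| 1, abs_nonneg y]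
  have hxyM : |x| * |y| ≤ max |x| 1 * max |y| 1 := by
    gcongr <;> exact le_max_left _ _
  rcases le_or_gt K j with hKj | hjK
  · have : (fib (K + 1) : ℤ) ≤ 2 * fib j := by
      exact_mod_cast (fib_mono (by omega)).trans (fib_succ_le_two_mul_fib hj)
    linarith
  · obtain ⟨s, rfl⟩ : ∃ s, K = j + s + 1 := ⟨K - j - 1, by omega⟩
    have hsx : (fib (s + 1) : ℤ) ≤ |x| := hx ▸ fib_succ_le_abs_fibForm p y j s hy hyj
    have h5 : (fib (j + s + 1 + 1) : ℤ) ≤ 5 * (fib j * fib (s + 1)) := by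
      rw [show j + s + 1 + 1 = j + (s + 1) + 1 by ring]
      exact_mod_cast fib_add_add_one_le_five_mul hj s.succ_ne_zero
    have : (fib j : ℤ) * fib (s + 1) ≤ |y| * |x| :=
      mul_le_mul hjy hsx (by positivity) (abs_nonneg y)
    linarith

/-- There is an absolute constant `γ > 0` such that for every `n > 2` the two-dimensional
hyperbolic cross `Γ(γ b_n) = {k ∈ ℤ² : max(|k₁|,1) · max(|k₂|,1) ≤ γ b_n}` contains no
nonzero point of the lattice `L(n) = {k ∈ ℤ² : k₁ + b_{n-1} k₂ ≡ 0 (mod b_n)}`. -/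
theorem fibonacci_hyperbolic_cross :
    ∃ γ : ℝ, 0 < γ ∧ ∀ n : ℕ, 2 < n → ∀ k : ℤ × ℤ, k ≠ 0 →
      (fibb n : ℤ) ∣ (k.1 + (fibb (n - 1) : ℤ) * k.2) →
      ¬ ((max |k.1| 1 * max |k.2| 1 : ℤ) : ℝ) ≤ γ * (fibb n : ℝ) := by
  refine ⟨1 / 6, by norm_num, fun n hn k hk hdvd hle => ?_⟩
  rw [fibb_eq_fib, fibb_eq_fib, Nat.sub_add_cancel (by omega : 1 ≤ n)] at hdvd
  rw [fibb_eq_fib] at hle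
  have key : ((fib (n + 1) : ℤ) : ℝ) ≤ 5 * ((max |k.1| 1 * max |k.2| 1 : ℤ) : ℝ) := by
    exact_mod_cast fib_succ_le_five_mul_of_dvd n k.1 k.2 hk hdvd
  have hpos : (0 : ℝ) < fib (n + 1) := by exact_mod_cast fib_pos.2 n.succ_pos
  push_cast at key hle
  linarith
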